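/- arXiv:2206.01172 — 2 statements merged into one kernel-verified Lean document; each statement's English description precedes it below -/
import Mathlib

section
/- For p > 2 there exists a finite constant K_p such that for any finite sequence of independent centered random variables η₁,…,η_n in L^p, ‖Σ_{k=1}^n η_k‖_{L^p} ≤ K_p·√(Σ_{k=1}^n ‖η_k‖_{L^p}²). (Consequence of Rosenthal's inequality.) -/
open MeasureTheory ProbabilityTheory Filter

/-- derivative of `x ↦ x * |x|^c` for `c > 0`. -/
private lemma hasDerivAt_mul_abs_rpow {c : ℝ} (hc : 0 < c) (x : ℝ) :
    HasDerivAt (fun x : ℝ => x * |x| ^ c) ((c + 1) * |x| ^ c) x := by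
  rcases eq_or_ne x 0 with rfl | hx
  · rw [hasDerivAt_iff_tendsto_slope]
    have h0 : |(0:ℝ)| ^ c = 0 := by
      rw [abs_zero, Real.zero_rpow hc.ne']
    have hb : ∀ h : ℝ, ‖slope (fun x : ℝ => x * |x| ^ c) 0 h‖ ≤ |h| ^ c := by
      intro h
      rcases eq_or_ne h 0 with rfl | hh
      · simp [slope, h0, Real.rpow_nonneg]
      · have : slope (fun x : ℝ => x * |x| ^ c) 0 h = |h| ^ c := by
          simp only [slope_def_field, h0]
          field_simp
          ring
        rw [this]
        simp [Real.norm_eq_abs, abs_of_nonneg (Real.rpow_nonneg (abs_nonneg h) c)]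
    have htend : Tendsto (fun h : ℝ => |h| ^ c) (nhds 0) (nhds 0) := by
      have h1 : Tendsto (fun y : ℝ => y ^ c) (nhds (|(0:ℝ)|)) (nhds 0) := by
        have := (Real.continuousAt_rpow_const 0 c (Or.inr hc.le)).tendsto
        simpa [abs_zero, Real.zero_rpow hc.ne'] using this
      exact h1.comp (continuous_abs.tendsto 0)
    have := squeeze_zero_norm (t₀ := nhdsWithin (0:ℝ) {(0:ℝ)}ᶜ) hb (htend.mono_left nhdsWithin_le_nhds)
    simpa [abs_zero, Real.zero_rpow hc.ne'] using this
  · have habs : HasDerivAt (fun x : ℝ => |x|) ((SignType.sign x : ℝ)) x := hasDerivAt_abs hx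
    have hpow : HasDerivAt (fun x : ℝ => |x| ^ c)
        ((SignType.sign x : ℝ) * c * |x| ^ (c - 1)) x :=
      habs.rpow_const (Or.inl (abs_ne_zero.mpr hx))
    have hmul := (hasDerivAt_id x).mul hpow
    refine hmul.congr_deriv ?_
    symm
    have hsign : x * (SignType.sign x : ℝ) = |x| := by
      rcases lt_or_gt_of_ne hx with h | h
      · simp [h, abs_of_neg h]
      · simp [h, abs_of_pos h]
    have habs1 : |x| * |x| ^ (c - 1) = |x| ^ c := by
      nth_rewrite 1 [← Real.rpow_one |x|]
      rw [← Real.rpow_add (abs_pos.mpr hx)]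
      ring_nf
    calc (c + 1) * |x| ^ c = 1 * |x| ^ c + c * (|x| * |x| ^ (c-1)) := by rw [habs1]; ring
    _ = 1 * |x| ^ c + c * ((x * (SignType.sign x : ℝ)) * |x| ^ (c-1)) := by rw [hsign]
    _ = 1 * |x| ^ c + id x * ((SignType.sign x : ℝ) * c * |x| ^ (c - 1)) := by
          simp only [id]; ring

/-- Lipschitz-type estimate for `φ(x) = x|x|^c` on bounded sets. -/
private lemma abs_phi_sub_phi_le {c : ℝ} (hc : 0 < c) (x y : ℝ) :
    |x * |x| ^ c - y * |y| ^ c| ≤ (c + 1) * (max |x| |y|) ^ c * |x - y| := by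
  set M := max |x| |y| with hM
  have hbound : ∀ z ∈ Set.uIcc y x, ‖(c + 1) * |z| ^ c‖ ≤ (c + 1) * M ^ c := by
    intro z hz
    have hzM : |z| ≤ M := by
      rcases le_total y x with h | h
      · rw [Set.uIcc_of_le h] at hz
        exact (abs_le_max_abs_abs hz.1 hz.2).trans (le_of_eq (max_comm _ _))
      · rw [Set.uIcc_of_ge h] at hz
        exact (abs_le_max_abs_abs hz.1 hz.2)
    rw [Real.norm_eq_abs, abs_of_nonneg (by positivity)]
    have : |z| ^ c ≤ M ^ c := Real.rpow_le_rpow (abs_nonneg z) hzM hc.le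
    nlinarith [Real.rpow_nonneg (abs_nonneg z) c]
  have hderiv : ∀ z ∈ Set.uIcc y x,
      HasDerivWithinAt (fun w : ℝ => w * |w| ^ c) ((c + 1) * |z| ^ c) (Set.uIcc y x) z :=
    fun z _ => (hasDerivAt_mul_abs_rpow hc z).hasDerivWithinAt
  have := Convex.norm_image_sub_le_of_norm_hasDerivWithin_le hderiv hbound
    (convex_uIcc y x) (Set.left_mem_uIcc) (Set.right_mem_uIcc)
  simpa [Real.norm_eq_abs] using this

/-- The key pointwise inequality behind the Rosenthal-type estimate. -/
private lemma key_pointwise {p : ℝ} (hp : 2 < p) (a b : ℝ) :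
    |a + b| ^ p ≤ |a| ^ p + p * (a * |a| ^ (p - 2) * b)
      + (p * (p - 1) * (2:ℝ) ^ p + (2:ℝ) ^ p + p) * (|a| ^ (p - 2) * b ^ 2 + |b| ^ p) := by
  have hp0 : (0:ℝ) < p := by linarith
  have hp1 : (1:ℝ) < p := by linarith
  have hp2 : (0:ℝ) < p - 2 := by linarith
  have h2p : (0:ℝ) ≤ (2:ℝ) ^ p := Real.rpow_nonneg (by norm_num) p
  have hu : (0:ℝ) ≤ |a| ^ (p-2) * b^2 := by positivity
  have hv : (0:ℝ) ≤ |b| ^ p := Real.rpow_nonneg (abs_nonneg b) p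
  have haP : (0:ℝ) ≤ |a| ^ p := Real.rpow_nonneg (abs_nonneg a) p
  rcases le_or_gt |b| |a| with hba | hba
  · -- |b| ≤ |a| : mean value argument
    set g : ℝ → ℝ := fun t => |a + t*b| ^ p - p * (a * |a| ^ (p-2)) * (t*b) with hg
    set g' : ℝ → ℝ := fun t =>
      (p * |a + t*b| ^ (p-2) * (a + t*b)) * b - p * (a * |a| ^ (p-2)) * b with hg'
    have hderiv : ∀ t : ℝ, HasDerivAt g (g' t) t := by
      intro t
      have hinner : HasDerivAt (fun t : ℝ => a + t*b) b t := by
        simpa using ((hasDerivAt_id t).mul_const b).const_add a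
      have h1 : HasDerivAt (fun t : ℝ => |a + t*b| ^ p)
          ((p * |a + t*b| ^ (p-2) * (a + t*b)) * b) t :=
        by have := (hasDerivAt_abs_rpow (a + t*b) hp1).comp t hinner; exact this
      have h2 : HasDerivAt (fun t : ℝ => p * (a * |a| ^ (p-2)) * (t*b))
          (p * (a * |a| ^ (p-2)) * b) t := by
        simpa using ((hasDerivAt_id t).mul_const b).const_mul (p * (a * |a| ^ (p-2)))
      exact h1.sub h2
    set M : ℝ := p * ((p - 1) * ((2:ℝ) ^ (p-2) * (|a| ^ (p-2) * b^2))) with hMdef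
    have hbound : ∀ t ∈ Set.Icc (0:ℝ) 1, ‖g' t‖ ≤ M := by
      intro t ht
      have ht0 := ht.1
      have ht1 := ht.2
      have htb : |t*b| ≤ |b| := by
        rw [abs_mul]
        calc |t| * |b| ≤ 1 * |b| := by
              apply mul_le_mul_of_nonneg_right _ (abs_nonneg b)
              rw [abs_of_nonneg ht0]; exact ht1
        _ = |b| := one_mul _
      have heq : g' t = p * b * ((a + t*b) * |a + t*b| ^ (p-2) - a * |a| ^ (p-2)) := by
        rw [hg']; ring
      rw [heq, Real.norm_eq_abs, abs_mul, abs_mul, abs_of_pos hp0]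
      have hphi := abs_phi_sub_phi_le hp2 (a + t*b) a
      have e1 : p - 2 + 1 = p - 1 := by ring
      rw [e1] at hphi
      have hmax : max |a + t*b| |a| ≤ 2 * |a| := by
        have h1 : |a + t*b| ≤ |a| + |t*b| := abs_add_le _ _
        apply max_le <;> nlinarith [abs_nonneg a]
      have hsub : |(a + t*b) - a| ≤ |b| := by
        have h' : (a + t*b) - a = t*b := by ring
        rw [h']; exact htb
      have hmaxpow : (max |a + t*b| |a|) ^ (p-2) ≤ (2:ℝ)^(p-2) * |a| ^ (p-2) := by
        have h0 : (0:ℝ) ≤ max |a+t*b| |a| := le_max_of_le_right (abs_nonneg a)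
        calc (max |a + t*b| |a|) ^ (p-2) ≤ (2*|a|) ^ (p-2) :=
              Real.rpow_le_rpow h0 hmax hp2.le
        _ = (2:ℝ)^(p-2) * |a| ^ (p-2) := Real.mul_rpow (by norm_num) (abs_nonneg a)
      have h3 : |(a + t*b) * |a + t*b| ^ (p-2) - a * |a| ^ (p-2)|
          ≤ (p-1) * ((2:ℝ)^(p-2) * |a| ^ (p-2)) * |b| := by
        refine hphi.trans ?_
        exact mul_le_mul (mul_le_mul_of_nonneg_left hmaxpow (by linarith : (0:ℝ) ≤ p - 1))
          hsub (abs_nonneg _) (mul_nonneg (by linarith) (by positivity))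
      calc p * |b| * |(a + t*b) * |a + t*b| ^ (p-2) - a * |a| ^ (p-2)|
          ≤ p * |b| * ((p-1) * ((2:ℝ)^(p-2) * |a| ^ (p-2)) * |b|) := by
            apply mul_le_mul_of_nonneg_left h3 (by positivity)
        _ = M := by rw [hMdef, ← sq_abs b]; ring
    have hmvt := Convex.norm_image_sub_le_of_norm_hasDerivWithin_le
      (f := g) (f' := g') (fun t _ => (hderiv t).hasDerivWithinAt) hbound
      (convex_Icc 0 1) (Set.left_mem_Icc.mpr zero_le_one) (Set.right_mem_Icc.mpr zero_le_one)
    have hg1 : g 1 = |a + b| ^ p - p * (a * |a| ^ (p-2)) * b := by simp [hg]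
    have hg0 : g 0 = |a| ^ p := by simp [hg]
    rw [hg1, hg0, Real.norm_eq_abs, Real.norm_eq_abs] at hmvt
    have hmvt' : |a + b| ^ p - p * (a * |a| ^ (p-2)) * b - |a| ^ p ≤ M := by
      have := (abs_le.mp (by simpa using hmvt)).2
      linarith [this]
    have h2le : (2:ℝ)^(p-2) ≤ (2:ℝ)^p :=
      Real.rpow_le_rpow_of_exponent_le (by norm_num) (by linarith)
    have hM2 : M ≤ (p * (p - 1) * (2:ℝ) ^ p + (2:ℝ) ^ p + p) * (|a| ^ (p - 2) * b ^ 2 + |b| ^ p) := by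
      have h1 : (0:ℝ) ≤ p * (p-1) := by nlinarith
      nlinarith [mul_nonneg (mul_nonneg h1 (sub_nonneg.mpr h2le)) hu,
        mul_nonneg h2p hu, mul_nonneg hp0.le hu,
        mul_nonneg (mul_nonneg h1 h2p) hv, mul_nonneg h2p hv, mul_nonneg hp0.le hv]
    nlinarith [hmvt', hM2]
  · -- |a| < |b|
    have h1 : |a + b| ^ p ≤ (2:ℝ)^p * |b| ^ p := by
      have hab : |a + b| ≤ 2 * |b| := (abs_add_le a b).trans (by linarith)
      calc |a + b| ^ p ≤ (2*|b|) ^ p := Real.rpow_le_rpow (abs_nonneg _) hab hp0.le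
      _ = (2:ℝ)^p * |b| ^ p := Real.mul_rpow (by norm_num) (abs_nonneg b)
    have h2 : |p * (a * |a| ^ (p - 2) * b)| ≤ p * |b| ^ p := by
      rw [abs_mul, abs_of_pos hp0, abs_mul, abs_mul,
        abs_of_nonneg (Real.rpow_nonneg (abs_nonneg a) (p-2))]
      have e1 : |a| * |a| ^ (p-2) = |a| ^ (p-1) := by
        nth_rewrite 1 [← Real.rpow_one |a|]
        rw [← Real.rpow_add' (abs_nonneg a) (by intro h; linarith [h])]
        ring_nf
      have e2 : |a| ^ (p-1) ≤ |b| ^ (p-1) :=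
        Real.rpow_le_rpow (abs_nonneg a) hba.le (by linarith)
      have e3 : |b| ^ (p-1) * |b| = |b| ^ p := by
        nth_rewrite 2 [← Real.rpow_one |b|]
        rw [← Real.rpow_add' (abs_nonneg b) (by intro h; linarith [h])]
        ring_nf
      have hcore : |a| * |a| ^ (p-2) * |b| ≤ |b| ^ p := by
        calc |a| * |a| ^ (p-2) * |b| = |a| ^ (p-1) * |b| := by rw [e1]
        _ ≤ |b| ^ (p-1) * |b| := mul_le_mul_of_nonneg_right e2 (abs_nonneg b)
        _ = |b| ^ p := e3
      exact mul_le_mul_of_nonneg_left hcore hp0.le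
    have h2' : -(p * |b| ^ p) ≤ p * (a * |a| ^ (p - 2) * b) := neg_le_of_abs_le h2
    nlinarith [mul_nonneg (mul_nonneg (by nlinarith : (0:ℝ) ≤ p*(p-1)) h2p) hv,
      mul_nonneg h2p hu, mul_nonneg hp0.le hu, mul_nonneg (mul_nonneg (by nlinarith : (0:ℝ) ≤ p*(p-1)) h2p) hu]

private lemma rpow_superadd {q : ℝ} (hq : 1 ≤ q) {x y : ℝ} (hx : 0 ≤ x) (hy : 0 ≤ y) :
    x ^ q + y ^ q ≤ (x + y) ^ q := by
  have hq0 : q ≠ 0 := by linarith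
  rcases eq_or_lt_of_le hx with hx0 | hx0
  · rw [← hx0, Real.zero_rpow hq0, zero_add, zero_add]
  rcases eq_or_lt_of_le hy with hy0 | hy0
  · rw [← hy0, Real.zero_rpow hq0, add_zero, add_zero]
  have hxy : (0:ℝ) < x + y := by linarith
  have e : ∀ z : ℝ, 0 < z → z ^ q = z * z ^ (q-1) := by
    intro z hz
    nth_rewrite 2 [← Real.rpow_one z]
    rw [← Real.rpow_add hz]
    ring_nf
  rw [e x hx0, e y hy0, e _ hxy]
  have h1 : x ^ (q-1) ≤ (x+y) ^ (q-1) :=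
    Real.rpow_le_rpow hx (by linarith) (by linarith)
  have h2 : y ^ (q-1) ≤ (x+y) ^ (q-1) :=
    Real.rpow_le_rpow hy (by linarith) (by linarith)
  nlinarith [Real.rpow_nonneg hx (q-1), Real.rpow_nonneg hy (q-1)]

private lemma rpow_bernoulli {q : ℝ} (hq : 1 < q) {u w : ℝ} (hu : 0 ≤ u) (hw : 0 ≤ w) :
    u ^ q + q * w * u ^ (q - 1) ≤ (u + w) ^ q := by
  rcases eq_or_lt_of_le hu with hu0 | hu0
  · rw [← hu0, Real.zero_rpow (by linarith : q ≠ 0),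
      Real.zero_rpow (by intro h; linarith [h] : q - 1 ≠ 0)]
    simpa using Real.rpow_nonneg hw q
  · have hs : (0:ℝ) ≤ w / u := div_nonneg hw hu0.le
    have hb := one_add_mul_self_le_rpow_one_add (by linarith : (-1:ℝ) ≤ w/u) hq.le
    have huq : (0:ℝ) < u ^ q := Real.rpow_pos_of_pos hu0 q
    have hmul := mul_le_mul_of_nonneg_left hb huq.le
    have e1 : u ^ q * (1 + q * (w/u)) = u ^ q + q * w * u ^ (q-1) := by
      have : u ^ (q-1) = u ^ q / u := by
        rw [Real.rpow_sub hu0, Real.rpow_one]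
      rw [this]
      field_simp
    have e2 : u ^ q * (1 + w/u) ^ q = (u + w) ^ q := by
      rw [← Real.mul_rpow hu (by positivity)]
      congr 1
      field_simp
    rw [e1, e2] at hmul
    exact hmul

private lemma scalar_combine {q Cp : ℝ} (hq : 1 < q) (hCp : 0 ≤ Cp) {u v : ℝ}
    (hu : 0 ≤ u) (hv : 0 ≤ v) :
    u ^ q + Cp * (u ^ (q-1) * v + v ^ q) ≤ (u + (Cp + max 1 Cp) * v) ^ q := by
  have h1 : u + (Cp + max 1 Cp) * v = (u + Cp*v) + (max 1 Cp)*v := by ring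
  have hmax1 : (1:ℝ) ≤ max 1 Cp := le_max_left _ _
  have h2 : ((u + Cp*v) ^ q) + ((max 1 Cp)*v) ^ q ≤ ((u + Cp*v) + (max 1 Cp)*v) ^ q :=
    rpow_superadd hq.le (by positivity) (by positivity)
  have h3 : u ^ q + q * (Cp*v) * u ^ (q-1) ≤ (u + Cp*v) ^ q :=
    rpow_bernoulli hq hu (by positivity)
  have h4 : Cp * (u ^ (q-1) * v) ≤ q * (Cp*v) * u ^ (q-1) := by
    have : (0:ℝ) ≤ Cp * v * u ^ (q-1) := by positivity
    nlinarith [Real.rpow_nonneg hu (q-1)]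
  have h5 : Cp * v ^ q ≤ ((max 1 Cp)*v) ^ q := by
    rw [Real.mul_rpow (by positivity) hv]
    have h6 : Cp ≤ (max 1 Cp) ^ q := by
      calc Cp ≤ max 1 Cp := le_max_right _ _
      _ = (max 1 Cp) ^ (1:ℝ) := (Real.rpow_one _).symm
      _ ≤ (max 1 Cp) ^ q := Real.rpow_le_rpow_of_exponent_le hmax1 hq.le
    exact mul_le_mul_of_nonneg_right h6 (Real.rpow_nonneg hv q)
  rw [h1]
  nlinarith [h2, h3, h4, h5]

private lemma abs_mul_abs_rpow {x : ℝ} {c : ℝ} (hc : 0 < c) :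
    |x| * |x| ^ c = |x| ^ (c + 1) := by
  nth_rewrite 1 [← Real.rpow_one |x|]
  rw [← Real.rpow_add' (abs_nonneg x) (by positivity)]
  ring_nf

/-- The inductive step: for independent `X`, `Y` with `Y` centered. -/
private lemma step_ineq {Ω : Type} [MeasurableSpace Ω] {P : Measure Ω} [IsProbabilityMeasure P]
    {p : ℝ} (hp : 2 < p) {X Y : Ω → ℝ} (hXm : Measurable X) (hYm : Measurable Y)
    (hX : MemLp X (ENNReal.ofReal p) P) (hY : MemLp Y (ENNReal.ofReal p) P)
    (hY0 : ∫ ω, Y ω ∂P = 0) (hind : ProbabilityTheory.IndepFun X Y P) :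
    ∫ ω, |X ω + Y ω| ^ p ∂P ≤
      ((∫ ω, |X ω| ^ p ∂P) ^ (2/p)
        + ((p * (p-1) * (2:ℝ)^p + (2:ℝ)^p + p)
            + max 1 (p * (p-1) * (2:ℝ)^p + (2:ℝ)^p + p)) * (∫ ω, |Y ω| ^ p ∂P) ^ (2/p)) ^ (p/2) := by
  have hp0 : (0:ℝ) < p := by linarith
  have hp2 : (0:ℝ) < p - 2 := by linarith
  set Cp : ℝ := p * (p-1) * (2:ℝ)^p + (2:ℝ)^p + p with hCpdef
  have hCp : 0 ≤ Cp := by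
    have h2p : (0:ℝ) ≤ (2:ℝ) ^ p := Real.rpow_nonneg (by norm_num) p
    have : (0:ℝ) ≤ p * (p-1) := by nlinarith
    nlinarith
  have hpE0 : ENNReal.ofReal p ≠ 0 := (ENNReal.ofReal_pos.mpr hp0).ne'
  have hpEt : ENNReal.ofReal p ≠ ⊤ := ENNReal.ofReal_ne_top
  -- the auxiliary functions
  set φ : ℝ → ℝ := fun x => x * |x| ^ (p-2) with hφdef
  set g : ℝ → ℝ := fun x => |x| ^ (p-2) with hgdef
  have hgc : Continuous g := continuous_abs.rpow_const (fun x => Or.inr hp2.le)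
  have hφc : Continuous φ := continuous_id.mul hgc
  -- integrability facts
  have i1 : Integrable (fun ω => |X ω + Y ω| ^ p) P := by
    simpa [Real.norm_eq_abs, ENNReal.toReal_ofReal hp0.le]
      using (hX.add hY).integrable_norm_rpow hpE0 hpEt
  have i2 : Integrable (fun ω => |X ω| ^ p) P := by
    simpa [Real.norm_eq_abs, ENNReal.toReal_ofReal hp0.le]
      using hX.integrable_norm_rpow hpE0 hpEt
  have i5 : Integrable (fun ω => |Y ω| ^ p) P := by
    simpa [Real.norm_eq_abs, ENNReal.toReal_ofReal hp0.le]
      using hY.integrable_norm_rpow hpE0 hpEt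
  have hXp1 : MemLp X (ENNReal.ofReal (p-1)) P :=
    hX.mono_exponent (ENNReal.ofReal_le_ofReal (by linarith))
  have iXp1 : Integrable (fun ω => |X ω| ^ (p-1)) P := by
    simpa [Real.norm_eq_abs, ENNReal.toReal_ofReal (by linarith : (0:ℝ) ≤ p - 1)]
      using hXp1.integrable_norm_rpow (ENNReal.ofReal_pos.mpr (by linarith)).ne' ENNReal.ofReal_ne_top
  have iφ : Integrable (fun ω => φ (X ω)) P := by
    refine iXp1.mono' ((hφc.measurable.comp hXm).aestronglyMeasurable) ?_
    filter_upwards with ω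
    rw [hφdef, Real.norm_eq_abs, abs_mul, abs_of_nonneg (Real.rpow_nonneg (abs_nonneg _) _)]
    rw [abs_mul_abs_rpow hp2]
    have : p - 2 + 1 = p - 1 := by ring
    rw [this]
  have hXp2 : MemLp X (ENNReal.ofReal (p-2)) P :=
    hX.mono_exponent (ENNReal.ofReal_le_ofReal (by linarith))
  have ig : Integrable (fun ω => g (X ω)) P := by
    simpa [hgdef, Real.norm_eq_abs, ENNReal.toReal_ofReal hp2.le]
      using hXp2.integrable_norm_rpow (ENNReal.ofReal_pos.mpr hp2).ne' ENNReal.ofReal_ne_top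
  have hY2 : MemLp Y 2 P := by
    refine hY.mono_exponent ?_
    calc (2 : ENNReal) = ENNReal.ofReal 2 := by norm_num
    _ ≤ ENNReal.ofReal p := ENNReal.ofReal_le_ofReal (by linarith)
  have iY2 : Integrable (fun ω => (Y ω) ^ 2) P := hY2.integrable_sq
  have iY : Integrable Y P := hY.integrable (ENNReal.one_le_ofReal.mpr (by linarith))
  -- independence of the composed functions
  have indφY : ProbabilityTheory.IndepFun (fun ω => φ (X ω)) Y P := by
    have := hind.comp hφc.measurable measurable_id
    exact this
  have indgY2 : ProbabilityTheory.IndepFun (fun ω => g (X ω)) (fun ω => (Y ω)^2) P := by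
    have := hind.comp hgc.measurable (measurable_id.pow_const 2)
    exact this
  have iφY : Integrable (fun ω => φ (X ω) * Y ω) P := indφY.integrable_mul iφ iY
  have igY2 : Integrable (fun ω => g (X ω) * (Y ω)^2) P := indgY2.integrable_mul ig iY2
  -- pointwise bound and integration
  have hpt : ∀ ω, |X ω + Y ω| ^ p ≤ |X ω| ^ p + p * (φ (X ω) * Y ω)
      + Cp * (g (X ω) * (Y ω)^2 + |Y ω| ^ p) := by
    intro ω
    have := key_pointwise hp (X ω) (Y ω)
    simpa [hφdef, hgdef, hCpdef, mul_assoc] using this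
  have iB : Integrable (fun ω => p * (φ (X ω) * Y ω)) P := iφY.const_mul p
  have iC0 : Integrable (fun ω => g (X ω) * (Y ω)^2 + |Y ω| ^ p) P := igY2.add i5
  have iC : Integrable (fun ω => Cp * (g (X ω) * (Y ω)^2 + |Y ω| ^ p)) P := iC0.const_mul Cp
  have iAB : Integrable (fun ω => |X ω| ^ p + p * (φ (X ω) * Y ω)) P := i2.add iB
  have iRHS : Integrable
      (fun ω => |X ω| ^ p + p * (φ (X ω) * Y ω) + Cp * (g (X ω) * (Y ω)^2 + |Y ω| ^ p)) P :=
    iAB.add iC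
  have hmono : ∫ ω, |X ω + Y ω| ^ p ∂P ≤
      ∫ ω, (|X ω| ^ p + p * (φ (X ω) * Y ω) + Cp * (g (X ω) * (Y ω)^2 + |Y ω| ^ p)) ∂P :=
    integral_mono i1 iRHS hpt
  -- compute the RHS using independence
  have hint1 : ∫ ω, φ (X ω) * Y ω ∂P = 0 := by
    have := indφY.integral_fun_mul_eq_mul_integral (iφ.aestronglyMeasurable) (iY.aestronglyMeasurable)
    calc ∫ ω, φ (X ω) * Y ω ∂P = (∫ ω, φ (X ω) ∂P) * ∫ ω, Y ω ∂P := this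
    _ = 0 := by rw [hY0, mul_zero]
  have hint2 : ∫ ω, g (X ω) * (Y ω)^2 ∂P = (∫ ω, g (X ω) ∂P) * ∫ ω, (Y ω)^2 ∂P :=
    indgY2.integral_fun_mul_eq_mul_integral (ig.aestronglyMeasurable) (iY2.aestronglyMeasurable)
  set A : ℝ := ∫ ω, |X ω| ^ p ∂P with hAdef
  set B : ℝ := ∫ ω, |Y ω| ^ p ∂P with hBdef
  have hA0 : 0 ≤ A := integral_nonneg (fun ω => Real.rpow_nonneg (abs_nonneg _) _)
  have hB0 : 0 ≤ B := integral_nonneg (fun ω => Real.rpow_nonneg (abs_nonneg _) _)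
  have hsplit : ∫ ω, (|X ω| ^ p + p * (φ (X ω) * Y ω) + Cp * (g (X ω) * (Y ω)^2 + |Y ω| ^ p)) ∂P
      = A + Cp * ((∫ ω, g (X ω) ∂P) * (∫ ω, (Y ω)^2 ∂P) + B) := by
    rw [integral_add iAB iC, integral_add i2 iB, integral_const_mul, integral_const_mul,
      integral_add igY2 i5, hint1, hint2]
    ring
  -- Hölder-type bounds via the Lp norm monotonicity
  have holder : ∀ (Z : Ω → ℝ) (c : ℝ), 0 < c → c < p → MemLp Z (ENNReal.ofReal p) P →
      ∫ ω, |Z ω| ^ c ∂P ≤ (∫ ω, |Z ω| ^ p ∂P) ^ (c / p) := by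
    intro Z c hc hcp hZ
    have hZc : MemLp Z (ENNReal.ofReal c) P :=
      hZ.mono_exponent (ENNReal.ofReal_le_ofReal (by linarith))
    have hIc0 : 0 ≤ ∫ ω, |Z ω| ^ c ∂P := integral_nonneg fun ω => Real.rpow_nonneg (abs_nonneg _) _
    have hIp0 : 0 ≤ ∫ ω, |Z ω| ^ p ∂P := integral_nonneg fun ω => Real.rpow_nonneg (abs_nonneg _) _
    have e1 : eLpNorm Z (ENNReal.ofReal c) P ≤ eLpNorm Z (ENNReal.ofReal p) P :=
      eLpNorm_le_eLpNorm_of_exponent_le (ENNReal.ofReal_le_ofReal (by linarith))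
        hZ.aestronglyMeasurable
    rw [hZc.eLpNorm_eq_integral_rpow_norm (ENNReal.ofReal_pos.mpr hc).ne' ENNReal.ofReal_ne_top,
      hZ.eLpNorm_eq_integral_rpow_norm hpE0 hpEt] at e1
    simp only [Real.norm_eq_abs, ENNReal.toReal_ofReal hc.le, ENNReal.toReal_ofReal hp0.le] at e1
    rw [ENNReal.ofReal_le_ofReal_iff (Real.rpow_nonneg hIp0 _)] at e1
    calc ∫ ω, |Z ω| ^ c ∂P = ((∫ ω, |Z ω| ^ c ∂P) ^ c⁻¹) ^ c :=
          (Real.rpow_inv_rpow hIc0 hc.ne').symm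
    _ ≤ ((∫ ω, |Z ω| ^ p ∂P) ^ p⁻¹) ^ c :=
          Real.rpow_le_rpow (Real.rpow_nonneg hIc0 _) e1 hc.le
    _ = (∫ ω, |Z ω| ^ p ∂P) ^ (c / p) := by
          rw [← Real.rpow_mul hIp0]
          congr 1
          field_simp
  have hH1 : ∫ ω, g (X ω) ∂P ≤ A ^ ((p-2) / p) := holder X (p-2) hp2 (by linarith) hX
  have hH2 : ∫ ω, (Y ω)^2 ∂P ≤ B ^ (2 / p) := by
    have h := holder Y 2 (by norm_num) (by linarith) hY
    have e : ∫ ω, |Y ω| ^ (2:ℝ) ∂P = ∫ ω, (Y ω)^2 ∂P := by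
      congr 1; funext ω; rw [Real.rpow_two, sq_abs]
    rwa [e] at h
  have hg0 : 0 ≤ ∫ ω, g (X ω) ∂P := integral_nonneg fun ω => Real.rpow_nonneg (abs_nonneg _) _
  have hY20 : 0 ≤ ∫ ω, (Y ω)^2 ∂P := integral_nonneg fun ω => sq_nonneg _
  have hprod : (∫ ω, g (X ω) ∂P) * (∫ ω, (Y ω)^2 ∂P) ≤ A ^ ((p-2)/p) * B ^ (2/p) :=
    mul_le_mul hH1 hH2 hY20 (Real.rpow_nonneg hA0 _)
  -- now the scalar computation
  have hq1 : (1:ℝ) < p / 2 := by linarith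
  have hsc := scalar_combine (q := p/2) (Cp := Cp) hq1 hCp
    (Real.rpow_nonneg hA0 (2/p)) (Real.rpow_nonneg hB0 (2/p))
  have eu : (A ^ (2/p)) ^ (p/2) = A := by
    rw [← Real.rpow_mul hA0, show 2/p*(p/2) = 1 by field_simp, Real.rpow_one]
  have ev : (B ^ (2/p)) ^ (p/2) = B := by
    rw [← Real.rpow_mul hB0, show 2/p*(p/2) = 1 by field_simp, Real.rpow_one]
  have eu1 : (A ^ (2/p)) ^ (p/2 - 1) = A ^ ((p-2)/p) := by
    rw [← Real.rpow_mul hA0]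
    congr 1
    field_simp
  rw [eu, ev, eu1] at hsc
  calc ∫ ω, |X ω + Y ω| ^ p ∂P
      ≤ A + Cp * ((∫ ω, g (X ω) ∂P) * (∫ ω, (Y ω)^2 ∂P) + B) := by
        rw [← hsplit]; exact hmono
    _ ≤ A + Cp * (A ^ ((p-2)/p) * B ^ (2/p) + B) := by nlinarith [hprod]
    _ ≤ (A ^ (2/p) + (Cp + max 1 Cp) * B ^ (2/p)) ^ (p/2) := hsc

private lemma sum_ineq {Ω : Type} [MeasurableSpace Ω] {P : Measure Ω} [IsProbabilityMeasure P]
    {p : ℝ} (hp : 2 < p) {n : ℕ} {η : Fin n → Ω → ℝ} (hmeas : ∀ k, Measurable (η k))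
    (hmem : ∀ k, MemLp (η k) (ENNReal.ofReal p) P) (h0 : ∀ k, ∫ ω, η k ω ∂P = 0)
    (hind : iIndepFun η P)
    (s : Finset (Fin n)) :
    ∫ ω, |∑ k ∈ s, η k ω| ^ p ∂P ≤
      ((((p * (p-1) * (2:ℝ)^p + (2:ℝ)^p + p)
          + max 1 (p * (p-1) * (2:ℝ)^p + (2:ℝ)^p + p)))
        * ∑ k ∈ s, (∫ ω, |η k ω| ^ p ∂P) ^ (2/p)) ^ (p/2) := by
  have hp0 : (0:ℝ) < p := by linarith
  set Cp : ℝ := p * (p-1) * (2:ℝ)^p + (2:ℝ)^p + p with hCpdef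
  set Cq : ℝ := Cp + max 1 Cp with hCqdef
  have hCq : 0 ≤ Cq := by
    have h2p : (0:ℝ) ≤ (2:ℝ) ^ p := Real.rpow_nonneg (by norm_num) p
    have hpp : (0:ℝ) ≤ p * (p-1) := by nlinarith
    have h1 : (0:ℝ) ≤ Cp := by
      rw [hCpdef]; nlinarith [mul_nonneg hpp h2p]
    have h2 : (1:ℝ) ≤ max 1 Cp := le_max_left _ _
    rw [hCqdef]; linarith
  induction s using Finset.induction_on with
  | empty =>
    simp [Real.zero_rpow hp0.ne', Real.zero_rpow (by positivity : p/2 ≠ 0)]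
  | insert i s hi ih =>
    set X : Ω → ℝ := fun ω => ∑ k ∈ s, η k ω with hXdef
    have hXm : Measurable X := Finset.measurable_sum s (fun k _ => hmeas k)
    have hXmem : MemLp X (ENNReal.ofReal p) P := memLp_finset_sum s (fun k _ => hmem k)
    have hindXY : ProbabilityTheory.IndepFun X (η i) P := by
      have h := hind.indepFun_finset_sum_of_notMem hmeas hi
      have e : (∑ j ∈ s, η j) = X := by
        funext ω; simp [hXdef, Finset.sum_apply]
      rwa [e] at h
    have hstep := step_ineq hp hXm (hmeas i) hXmem (hmem i) (h0 i) hindXY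
    have hL : ∫ ω, |∑ k ∈ insert i s, η k ω| ^ p ∂P = ∫ ω, |X ω + η i ω| ^ p ∂P := by
      congr 1; funext ω
      rw [Finset.sum_insert hi, add_comm]
    set B : ℝ := ∫ ω, |η i ω| ^ p ∂P with hBdef
    set T : ℝ := ∑ k ∈ s, (∫ ω, |η k ω| ^ p ∂P) ^ (2/p) with hTdef
    have hT0 : 0 ≤ T := Finset.sum_nonneg fun k _ => Real.rpow_nonneg
      (integral_nonneg fun ω => Real.rpow_nonneg (abs_nonneg _) _) _
    have hB0 : 0 ≤ B := integral_nonneg fun ω => Real.rpow_nonneg (abs_nonneg _) _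
    have hIX0 : 0 ≤ ∫ ω, |X ω| ^ p ∂P :=
      integral_nonneg fun ω => Real.rpow_nonneg (abs_nonneg _) _
    have hu : (∫ ω, |X ω| ^ p ∂P) ^ (2/p) ≤ Cq * T := by
      have h1 : (∫ ω, |X ω| ^ p ∂P) ^ (2/p) ≤ ((Cq * T) ^ (p/2)) ^ (2/p) :=
        Real.rpow_le_rpow hIX0 ih (by positivity)
      have h2 : ((Cq * T) ^ (p/2)) ^ (2/p) = Cq * T := by
        rw [← Real.rpow_mul (by positivity), show p/2*(2/p) = 1 by field_simp, Real.rpow_one]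
      rwa [h2] at h1
    have hsum : (∫ ω, |X ω| ^ p ∂P) ^ (2/p) + Cq * B ^ (2/p)
        ≤ Cq * ∑ k ∈ insert i s, (∫ ω, |η k ω| ^ p ∂P) ^ (2/p) := by
      rw [Finset.sum_insert hi]
      have : Cq * (B ^ (2/p) + T) = Cq * B ^ (2/p) + Cq * T := by ring
      rw [this]
      linarith
    calc ∫ ω, |∑ k ∈ insert i s, η k ω| ^ p ∂P
        = ∫ ω, |X ω + η i ω| ^ p ∂P := hL
      _ ≤ ((∫ ω, |X ω| ^ p ∂P) ^ (2/p) + Cq * B ^ (2/p)) ^ (p/2) := hstep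
      _ ≤ (Cq * ∑ k ∈ insert i s, (∫ ω, |η k ω| ^ p ∂P) ^ (2/p)) ^ (p/2) := by
          apply Real.rpow_le_rpow _ hsum (by positivity)
          have : (0:ℝ) ≤ Cq * B ^ (2/p) := mul_nonneg hCq (Real.rpow_nonneg hB0 _)
          linarith [Real.rpow_nonneg hIX0 (2/p)]

/-- Consequence of Rosenthal's inequality: for `p > 2` there is a finite
constant `K_p` such that for every finite family of independent centered random
variables in `L^p`, `‖Σ η_k‖_{L^p} ≤ K_p·√(Σ ‖η_k‖_{L^p}²)`. -/
theorem stmt_9 (p : ℝ) (hp : 2 < p) :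
    ∃ K : ℝ, ∀ (Ω : Type) (_ : MeasurableSpace Ω) (P : Measure Ω),
      IsProbabilityMeasure P →
      ∀ (n : ℕ) (η : Fin n → Ω → ℝ), (∀ k, Measurable (η k)) →
        (∀ k, MemLp (η k) (ENNReal.ofReal p) P) →
        (∀ k, (∫ ω, η k ω ∂P) = 0) →
        iIndepFun η P →
        (eLpNorm (∑ k, η k) (ENNReal.ofReal p) P).toReal ≤
          K * Real.sqrt (∑ k, ((eLpNorm (η k) (ENNReal.ofReal p) P).toReal) ^ 2) := by
  have hp0 : (0:ℝ) < p := by linarith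
  set Cp : ℝ := p * (p-1) * (2:ℝ)^p + (2:ℝ)^p + p with hCpdef
  set Cq : ℝ := Cp + max 1 Cp with hCqdef
  have hCq : 0 ≤ Cq := by
    have h2p : (0:ℝ) ≤ (2:ℝ) ^ p := Real.rpow_nonneg (by norm_num) p
    have hpp : (0:ℝ) ≤ p * (p-1) := by nlinarith
    have h1 : (0:ℝ) ≤ Cp := by
      rw [hCpdef]; nlinarith [mul_nonneg hpp h2p]
    have h2 : (1:ℝ) ≤ max 1 Cp := le_max_left _ _
    rw [hCqdef]; linarith
  refine ⟨Real.sqrt Cq, ?_⟩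
  intro Ω _ P hP n η hmeas hmem h0 hind
  have hpE0 : ENNReal.ofReal p ≠ 0 := (ENNReal.ofReal_pos.mpr hp0).ne'
  have hpEt : ENNReal.ofReal p ≠ ⊤ := ENNReal.ofReal_ne_top
  -- identify the eLpNorms with integrals
  have hNk : ∀ k, ((eLpNorm (η k) (ENNReal.ofReal p) P).toReal) ^ 2
      = (∫ ω, |η k ω| ^ p ∂P) ^ (2/p) := by
    intro k
    rw [(hmem k).eLpNorm_eq_integral_rpow_norm hpE0 hpEt]
    have hI0 : 0 ≤ ∫ ω, ‖η k ω‖ ^ p ∂P :=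
      integral_nonneg fun ω => Real.rpow_nonneg (norm_nonneg _) _
    rw [ENNReal.toReal_ofReal (by positivity)]
    simp only [Real.norm_eq_abs, ENNReal.toReal_ofReal hp0.le]
    rw [← Real.rpow_natCast ((∫ ω, |η k ω| ^ p ∂P) ^ p⁻¹) 2, ← Real.rpow_mul
      (integral_nonneg fun ω => Real.rpow_nonneg (abs_nonneg _) _)]
    congr 1
    push_cast
    field_simp
  set T : ℝ := ∑ k, ((eLpNorm (η k) (ENNReal.ofReal p) P).toReal) ^ 2 with hTdef
  have hT0 : 0 ≤ T := Finset.sum_nonneg fun k _ => sq_nonneg _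
  have hmain := sum_ineq hp hmeas hmem h0 hind Finset.univ
  have hTeq : ∑ k, (∫ ω, |η k ω| ^ p ∂P) ^ (2/p) = T := by
    rw [hTdef]
    exact Finset.sum_congr rfl fun k _ => (hNk k).symm
  rw [hTeq] at hmain
  have hSmem : MemLp (∑ k, η k) (ENNReal.ofReal p) P :=
    memLp_finset_sum' Finset.univ (fun k _ => hmem k)
  have hLHS : (eLpNorm (∑ k, η k) (ENNReal.ofReal p) P).toReal
      = (∫ ω, |∑ k, η k ω| ^ p ∂P) ^ p⁻¹ := by
    rw [hSmem.eLpNorm_eq_integral_rpow_norm hpE0 hpEt]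
    have hI0 : 0 ≤ ∫ ω, ‖(∑ k, η k) ω‖ ^ p ∂P :=
      integral_nonneg fun ω => Real.rpow_nonneg (norm_nonneg _) _
    rw [ENNReal.toReal_ofReal (by positivity)]
    simp only [Real.norm_eq_abs, ENNReal.toReal_ofReal hp0.le, Finset.sum_apply]
  have hI0 : 0 ≤ ∫ ω, |∑ k, η k ω| ^ p ∂P :=
    integral_nonneg fun ω => Real.rpow_nonneg (abs_nonneg _) _
  rw [hLHS]
  calc (∫ ω, |∑ k, η k ω| ^ p ∂P) ^ p⁻¹
      ≤ ((Cq * T) ^ (p/2)) ^ p⁻¹ := Real.rpow_le_rpow hI0 hmain (inv_nonneg.mpr hp0.le)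
    _ = (Cq * T) ^ (1/2 : ℝ) := by
        rw [← Real.rpow_mul (mul_nonneg hCq hT0)]
        congr 1
        field_simp
    _ = Real.sqrt (Cq * T) := by rw [Real.sqrt_eq_rpow]
    _ = Real.sqrt Cq * Real.sqrt T := Real.sqrt_mul hCq T
end

section
/- Let ξ_i be independent centered random variables with 0 < σ_i < ∞ and suppose ψ(p) := sup_i ‖ξ_i/σ_i‖_{L^p} is finite on [2, b) for some b > 2. Define ψ̃(p) = C_R·(p/ln p)·ψ(p) for p ∈ [2,b), where C_R is the Rosenthal constant such that the L^p Rosenthal inequality holds with constant C_R·p/ln p. Then sup_n ‖S_n‖_{Gψ̃} ≤ sup_i ‖ξ_i/σ_i‖_{Gψ}, where S_n = (Σξ_i)/√(Σσ_i²) and Gψ denotes the Grand Lebesgue norm sup_p ‖·‖_p/ψ(p) over p ∈ [2,b). -/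
open MeasureTheory ProbabilityTheory Finset

lemma aux_indep_fin {Ω : Type*} [MeasurableSpace Ω] {P : Measure Ω} {f : ℕ → Ω → ℝ}
    (h : iIndepFun f P) (n : ℕ) :
    iIndepFun (fun k : Fin n => f k) P := by
  classical
  rw [iIndepFun_iff_measure_inter_preimage_eq_mul] at h ⊢
  intro S sets hsets
  set sets' : ℕ → Set ℝ := fun i => if hi : i < n then sets ⟨i, hi⟩ else Set.univ with hsets'
  have hmeas' : ∀ i, i ∈ S.map Fin.valEmbedding → MeasurableSet (sets' i) := by
    intro i hi
    rw [Finset.mem_map] at hi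
    obtain ⟨k, hk, rfl⟩ := hi
    simp only [sets', Fin.valEmbedding_apply, k.isLt, dif_pos, Fin.eta]
    exact hsets k hk
  have key := h (S.map Fin.valEmbedding) hmeas'
  have h1 : (⋂ i ∈ S.map Fin.valEmbedding, f i ⁻¹' sets' i)
      = ⋂ k ∈ S, (fun k : Fin n => f k) k ⁻¹' sets k := by
    ext ω
    simp only [Set.mem_iInter, Finset.mem_map, Fin.valEmbedding_apply]
    constructor
    · intro H k hk
      have := H k (⟨k, hk, rfl⟩)
      simpa only [sets', k.isLt, dif_pos, Fin.eta] using this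
    · rintro H i ⟨k, hk, rfl⟩
      simpa only [sets', k.isLt, dif_pos, Fin.eta] using H k hk
  have h2 : (∏ i ∈ S.map Fin.valEmbedding, P (f i ⁻¹' sets' i))
      = ∏ k ∈ S, P ((fun k : Fin n => f k) k ⁻¹' sets k) := by
    rw [Finset.prod_map]
    refine Finset.prod_congr rfl fun k hk => ?_
    simp only [sets', Fin.valEmbedding_apply, k.isLt, dif_pos, Fin.eta]
  rw [← h1, ← h2]
  exact key

/-- Grand Lebesgue Space version of the modified Bernstein inequality, via
Rosenthal's inequality. Let `ξ_i` be independent centered random variables with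
`0 < σ_i < ∞` and let `ψ(p) = sup_i ‖ξ_i/σ_i‖_{L^p}` be finite on `[2,b)`.
Let `C_R` be a Rosenthal constant, so that for independent centered families
`‖Σ η_k‖_p ≤ C_R·(p/ln p)·√(Σ ‖η_k‖_p²)` for `p ∈ [2,b)`, and set
`ψ̃(p) = C_R·(p/ln p)·ψ(p)`. If `Γ` bounds the `Gψ`-norms, i.e.
`‖ξ_i/σ_i‖_p ≤ Γ·ψ(p)` for all `i` and `p ∈ [2,b)`, then
`‖S_n‖_p ≤ Γ·ψ̃(p)` for all `n ≥ 1` and `p ∈ [2,b)`; that is,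
`sup_n ‖S_n‖_{Gψ̃} ≤ sup_i ‖ξ_i/σ_i‖_{Gψ}`. -/
theorem stmt_18 {Ω : Type*} [MeasurableSpace Ω] (P : Measure Ω) [IsProbabilityMeasure P]
    (b : ENNReal) (hb : 2 < b) (ψ : ℝ → ℝ)
    (ξ : ℕ → Ω → ℝ) (σ : ℕ → ℝ)
    (hmeas : ∀ i, Measurable (ξ i))
    (hcent : ∀ i, (∫ ω, ξ i ω ∂P) = 0)
    (hindep : iIndepFun ξ P)
    (hσ : ∀ i, 0 < σ i) (hvar : ∀ i, (σ i) ^ 2 = variance (ξ i) P)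
    (hMem : ∀ i, ∀ p : ℝ, 2 ≤ p → ENNReal.ofReal p < b →
      MemLp (ξ i) (ENNReal.ofReal p) P)
    (hψ : ∀ p : ℝ, 2 ≤ p → ENNReal.ofReal p < b →
      IsLUB {y : ℝ | ∃ i : ℕ,
        y = (eLpNorm (fun ω => ξ i ω / σ i) (ENNReal.ofReal p) P).toReal} (ψ p))
    (CR : ℝ) (hCRpos : 0 < CR)
    (hRos : ∀ p : ℝ, 2 ≤ p → ENNReal.ofReal p < b →
      ∀ (n : ℕ) (η : Fin n → Ω → ℝ), (∀ k, Measurable (η k)) →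
        (∀ k, MemLp (η k) (ENNReal.ofReal p) P) →
        (∀ k, (∫ ω, η k ω ∂P) = 0) →
        iIndepFun η P →
        (eLpNorm (∑ k, η k) (ENNReal.ofReal p) P).toReal ≤
          CR * (p / Real.log p) *
            Real.sqrt (∑ k, ((eLpNorm (η k) (ENNReal.ofReal p) P).toReal) ^ 2))
    (Γ : ℝ)
    (hΓ : ∀ i : ℕ, ∀ p : ℝ, 2 ≤ p → ENNReal.ofReal p < b →
      (eLpNorm (fun ω => ξ i ω / σ i) (ENNReal.ofReal p) P).toReal ≤ Γ * ψ p) :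
    ∀ n : ℕ, 1 ≤ n → ∀ p : ℝ, 2 ≤ p → ENNReal.ofReal p < b →
      (eLpNorm (fun ω => (∑ i ∈ range n, ξ i ω) /
          Real.sqrt (∑ i ∈ range n, (σ i) ^ 2)) (ENNReal.ofReal p) P).toReal ≤
        Γ * (CR * (p / Real.log p) * ψ p) := by
  intro n hn p hp2 hpb
  have hsumpos : 0 < ∑ i ∈ range n, (σ i) ^ 2 :=
    Finset.sum_pos (fun i _ => pow_pos (hσ i) 2) (nonempty_range_iff.2 (by omega))
  set c : ℝ := Real.sqrt (∑ i ∈ range n, (σ i) ^ 2) with hc_def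
  have hc : 0 < c := Real.sqrt_pos.2 hsumpos
  set η : Fin n → Ω → ℝ := fun k ω => ξ k ω / c with hη_def
  have hηmeas : ∀ k, Measurable (η k) := fun k => (hmeas k).div_const c
  have hηmem : ∀ k, MemLp (η k) (ENNReal.ofReal p) P := by
    intro k
    have := (hMem k p hp2 hpb).const_mul c⁻¹
    simpa [hη_def, div_eq_inv_mul] using this
  have hηcent : ∀ k, (∫ ω, η k ω ∂P) = 0 := by
    intro k
    simp only [hη_def]
    rw [integral_div, hcent k, zero_div]
  have hηindep : iIndepFun η P := by
    have := (aux_indep_fin hindep n).comp (fun _ x => x / c)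
      (fun _ => measurable_id.div_const c)
    exact this
  have hR := hRos p hp2 hpb n η hηmeas hηmem hηcent hηindep
  have hsum : (∑ k, η k) = fun ω => (∑ i ∈ range n, ξ i ω) / c := by
    funext ω
    simp only [Finset.sum_apply, hη_def]
    rw [← Finset.sum_div]
    congr 1
    exact Fin.sum_univ_eq_sum_range (fun i => ξ i ω) n
  rw [hsum] at hR
  refine hR.trans ?_
  set A : ℝ := Γ * ψ p with hA_def
  have hA : 0 ≤ A := le_trans ENNReal.toReal_nonneg (hΓ 0 p hp2 hpb)
  have hnorm : ∀ k : Fin n, (eLpNorm (η k) (ENNReal.ofReal p) P).toReal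
      = (σ k / c) * (eLpNorm (fun ω => ξ k ω / σ k) (ENNReal.ofReal p) P).toReal := by
    intro k
    have heq : η k = (σ k / c) • (fun ω => ξ k ω / σ k) := by
      funext ω
      simp only [hη_def, Pi.smul_apply, smul_eq_mul]
      rw [div_mul_div_comm, mul_comm (σ (k : ℕ)) (ξ (k : ℕ) ω),
        mul_div_mul_right _ _ (hσ (k : ℕ)).ne']
    rw [heq, eLpNorm_const_smul, ENNReal.toReal_mul, toReal_enorm,
      Real.norm_eq_abs, abs_of_pos (div_pos (hσ k) hc)]
  have hone : (∑ k : Fin n, ((σ k : ℝ) / c) ^ 2) = 1 := by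
    have hc2 : c ^ 2 = ∑ i ∈ range n, (σ i) ^ 2 := Real.sq_sqrt hsumpos.le
    simp only [div_pow]
    rw [← Finset.sum_div, Fin.sum_univ_eq_sum_range (fun i => (σ i) ^ 2) n, hc2,
      div_self hsumpos.ne']
  have hsq : (∑ k : Fin n, ((eLpNorm (η k) (ENNReal.ofReal p) P).toReal) ^ 2) ≤ A ^ 2 := by
    calc (∑ k : Fin n, ((eLpNorm (η k) (ENNReal.ofReal p) P).toReal) ^ 2)
        = ∑ k : Fin n, ((σ k : ℝ) / c) ^ 2 *
            ((eLpNorm (fun ω => ξ k ω / σ k) (ENNReal.ofReal p) P).toReal) ^ 2 := by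
          refine Finset.sum_congr rfl fun k _ => ?_
          rw [hnorm k, mul_pow]
      _ ≤ ∑ k : Fin n, ((σ k : ℝ) / c) ^ 2 * A ^ 2 := by
          refine Finset.sum_le_sum fun k _ => ?_
          exact mul_le_mul_of_nonneg_left
            (pow_le_pow_left₀ ENNReal.toReal_nonneg (hΓ k p hp2 hpb) 2) (sq_nonneg _)
      _ = (∑ k : Fin n, ((σ k : ℝ) / c) ^ 2) * A ^ 2 := (Finset.sum_mul _ _ _).symm
      _ = A ^ 2 := by rw [hone, one_mul]
  have hsqrt : Real.sqrt (∑ k : Fin n, ((eLpNorm (η k) (ENNReal.ofReal p) P).toReal) ^ 2) ≤ A :=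
    (Real.sqrt_le_sqrt hsq).trans_eq (Real.sqrt_sq hA)
  have hcoef : 0 ≤ CR * (p / Real.log p) := by
    have hlog : 0 < Real.log p := Real.log_pos (by linarith)
    positivity
  calc CR * (p / Real.log p) *
        Real.sqrt (∑ k : Fin n, ((eLpNorm (η k) (ENNReal.ofReal p) P).toReal) ^ 2)
      ≤ CR * (p / Real.log p) * A := mul_le_mul_of_nonneg_left hsqrt hcoef
    _ = Γ * (CR * (p / Real.log p) * ψ p) := by rw [hA_def]; ring
end
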